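/- arXiv:1204.5666 — 2 statements merged into one kernel-verified Lean document; each statement's English description precedes it below -/
import Mathlib

section
/- Let g : (ZMod 3)^L → ℂ be folded. Then, under the 4NAT test distribution, E[g(y)·conj(g(z))] = 0. -/
/-!
Given `x_{π(j)}, y_j, z_j`, at most one `w_j` completes them to a `TwoPair`, so summing out `w`
leaves the uniform weight on the triples `(x, y, z)` admitting a completion in every coordinate.
That support is invariant under `(x, y, z) ↦ (x - 𝟙, y + 𝟙, z)`, which by foldedness multiplies
`g y · conj (g z)` by `ω`. So the expectation equals `ω` times itself, and `ω ≠ 1`.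
-/

open Finset

noncomputable def ω : ℂ := Complex.exp (2 * (Real.pi : ℂ) * Complex.I / 3)

/-- `f` is folded: it takes values in `{1, ω, ω²}` and shifting the input by
`c·𝟙` multiplies the output by `ω^c`. -/
def FoldedC {ι : Type} [Fintype ι] (f : (ι → ZMod 3) → ℂ) : Prop :=
  (∀ x, f x ∈ ({1, ω, ω ^ 2} : Set ℂ)) ∧
  ∀ (x : ι → ZMod 3) (c : ZMod 3), f (fun i => x i + c) = ω ^ c.val * f x

/-- The TwoPair predicate: the four inputs take exactly two distinct values,
each occurring exactly twice. -/
def TwoPair (a : Fin 4 → ZMod 3) : Prop :=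
  ∃ b c : ZMod 3, b ≠ c ∧
    (univ.filter fun i => a i = b).card = 2 ∧
    (univ.filter fun i => a i = c).card = 2

-- Expectation of a complex-valued function of `(x, y, z, w)` under the 4NAT
-- test distribution with parameters `d`, `K` (coordinates `j ∈ [L]`, `L = dK`,
-- are encoded as pairs `(i, j') ∈ Fin K × Fin d` with block `π(j) = i`):
-- `x` is uniform on `(ZMod 3)^K` and, independently for each coordinate `j`,
-- `(y_j, z_j, w_j)` is uniform on the 6 triples with
-- `TwoPair (x_{π(j)}, y_j, z_j, w_j)`.
open Classical in
noncomputable def natTestExpC (d K : ℕ)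
    (h : (Fin K → ZMod 3) → ((Fin K × Fin d) → ZMod 3) →
         ((Fin K × Fin d) → ZMod 3) → ((Fin K × Fin d) → ZMod 3) → ℂ) : ℂ :=
  (∑ x : Fin K → ZMod 3, ∑ y : (Fin K × Fin d) → ZMod 3,
    ∑ z : (Fin K × Fin d) → ZMod 3, ∑ w : (Fin K × Fin d) → ZMod 3,
      (if ∀ j : Fin K × Fin d, TwoPair ![x j.1, y j, z j, w j] then 1 else 0)
        * h x y z w)
    / (3 ^ K * 6 ^ (d * K))

lemma card_filter_forall_eq_ite {ι α : Type*} [Fintype ι] [DecidableEq ι] [Fintype α]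
    (P : ι → α → Prop)
    [DecidablePred fun w : ι → α => ∀ j, P j (w j)] [Decidable (∀ j, ∃ t, P j t)]
    (hP : ∀ j t t', P j t → P j t' → t = t') :
    #{w : ι → α | ∀ j, P j (w j)} = if ∀ j, ∃ t, P j t then 1 else 0 := by
  split_ifs with h
  · choose f hf using h
    refine card_eq_one.mpr ⟨f, eq_singleton_iff_unique_mem.mpr ⟨by simpa using hf, ?_⟩⟩
    intro w hw
    exact funext fun j => hP j _ _ ((mem_filter.mp hw).2 j) (hf j)
  · exact card_eq_zero.mpr (filter_eq_empty_iff.mpr fun w _ hw => h fun j => ⟨w j, hw j⟩)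

lemma twoPair_right_unique (a y z t t' : ZMod 3) :
    TwoPair ![a, y, z, t] → TwoPair ![a, y, z, t'] → t = t' := by
  unfold TwoPair; revert a y z t t'; decide

lemma exists_twoPair_sub_one_add_one_iff (a y z : ZMod 3) :
    (∃ t, TwoPair ![a - 1, y + 1, z, t]) ↔ ∃ t, TwoPair ![a, y, z, t] := by
  unfold TwoPair; revert a y z; decide

section NatTest

variable {d K : ℕ}

def NatAdmissible (x : Fin K → ZMod 3) (y z : Fin K × Fin d → ZMod 3) : Prop :=
  ∀ j, ∃ t, TwoPair ![x j.1, y j, z j, t]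

lemma natAdmissible_sub_one_add_one_iff (x : Fin K → ZMod 3) (y z : Fin K × Fin d → ZMod 3) :
    NatAdmissible (x - 1) (y + 1) z ↔ NatAdmissible x y z :=
  forall_congr' fun j => exists_twoPair_sub_one_add_one_iff (x j.1) (y j) (z j)

open Classical in
lemma natTestExpC_eq_sum_natAdmissible
    (h : (Fin K → ZMod 3) → (Fin K × Fin d → ZMod 3) → (Fin K × Fin d → ZMod 3) → ℂ) :
    natTestExpC d K (fun x y z _ => h x y z) =
      (∑ x, ∑ y, ∑ z, (if NatAdmissible x y z then 1 else 0) * h x y z)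
        / (3 ^ K * 6 ^ (d * K)) := by
  unfold natTestExpC NatAdmissible
  simp only [← sum_mul, sum_boole]
  congr! 5 with x _ y _ z _
  rw [card_filter_forall_eq_ite _ fun j => twoPair_right_unique _ _ _]
  push_cast
  congr

open Classical in
lemma sum_natAdmissible_shift
    (h : (Fin K → ZMod 3) → (Fin K × Fin d → ZMod 3) → (Fin K × Fin d → ZMod 3) → ℂ) :
    ∑ x, ∑ y, ∑ z, (if NatAdmissible x y z then 1 else 0) * h x y z =
      ∑ x, ∑ y, ∑ z, (if NatAdmissible x y z then 1 else 0) * h (x - 1) (y + 1) z := by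
  rw [← Equiv.sum_comp (Equiv.subRight 1)]
  refine sum_congr rfl fun x _ => ?_
  rw [← Equiv.sum_comp (Equiv.addRight 1)]
  simp only [Equiv.subRight_apply, Equiv.coe_addRight, natAdmissible_sub_one_add_one_iff]

end NatTest

lemma omega_ne_one : ω ≠ 1 := by
  have h := Complex.isPrimitiveRoot_exp 3 three_ne_zero
  push_cast at h
  exact h.ne_one (by norm_num)

theorem folded_expectation_zero_general (d K : ℕ)
    (g : ((Fin K × Fin d) → ZMod 3) → ℂ) (hg : FoldedC g) :
    natTestExpC d K (fun _x y z _w => g y * (starRingEnd ℂ) (g z)) = 0 := by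
  classical
  have hg_shift (y : Fin K × Fin d → ZMod 3) : g (y + 1) = ω * g y := by
    rw [← pow_one ω, show 1 = (1 : ZMod 3).val from rfl]
    exact hg.2 y 1
  have hS : ω * ∑ x, ∑ y, ∑ z,
        (if NatAdmissible x y z then 1 else 0) * (g y * (starRingEnd ℂ) (g z)) =
      ∑ x, ∑ y, ∑ z,
        (if NatAdmissible x y z then 1 else 0) * (g y * (starRingEnd ℂ) (g z)) := by
    conv_rhs => rw [sum_natAdmissible_shift]
    simp only [hg_shift, mul_sum]
    ring_nf
  rw [natTestExpC_eq_sum_natAdmissible, (mul_left_eq_self₀.mp hS).resolve_left omega_ne_one,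
    zero_div]

theorem folded_expectation_zero (d K : ℕ) (hd : 0 < d) (hK : 0 < K)
    (g : ((Fin K × Fin d) → ZMod 3) → ℂ) (hg : FoldedC g) :
    natTestExpC d K (fun _x y z _w => g y * (starRingEnd ℂ) (g z)) = 0 :=
  folded_expectation_zero_general d K g hg
end

section
/- Let a ∈ ZMod 3 and f₁, f₂ ∈ ZMod 3. If f₁ − f₂ ≠ a, then there exists a pair (g₁, g₂) ∈ (ZMod 3)² with g₁ − g₂ ≠ a, g₁ = f₁, and g₂ = f₂. If f₁ − f₂ = a, then every pair (g₁, g₂) with g₁ − g₂ ≠ a satisfies ¬(g₁ = f₁ ∧ g₂ = f₂), and there exists a pair (g₁, g₂) with g₁ − g₂ ≠ a for which exactly one of the equalities g₁ = f₁, g₂ = f₂ holds. -/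
/-! Both equalities can hold only for the pair (f₁, f₂) itself, which violates the constraint
exactly when f₁ − f₂ = a. In that case shifting g₂ by any nonzero c gives g₁ − g₂ = a + c ≠ a
while keeping g₁ = f₁. -/

theorem exists_sub_ne_and_xor_eq {G : Type*} [AddGroup G] [Nontrivial G] {a f₁ f₂ : G}
    (h : f₁ - f₂ = a) : ∃ g₁ g₂ : G, g₁ - g₂ ≠ a ∧ Xor (g₁ = f₁) (g₂ = f₂) := by
  obtain ⟨c, hc⟩ := exists_ne (0 : G)
  have hsub : f₁ - (-c + f₂) = a + c := by
    rw [sub_eq_add_neg, neg_add_rev, neg_neg, ← add_assoc, ← sub_eq_add_neg, h]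
  refine ⟨f₁, -c + f₂, ?_, Or.inl ⟨rfl, ?_⟩⟩
  · rwa [hsub, Ne, add_eq_left]
  · rwa [add_eq_right, neg_eq_zero]

theorem constraint_variable_gadget (a f₁ f₂ : ZMod 3) :
    (f₁ - f₂ ≠ a → ∃ g₁ g₂ : ZMod 3, g₁ - g₂ ≠ a ∧ g₁ = f₁ ∧ g₂ = f₂) ∧
    (f₁ - f₂ = a →
      (∀ g₁ g₂ : ZMod 3, g₁ - g₂ ≠ a → ¬(g₁ = f₁ ∧ g₂ = f₂)) ∧
      ∃ g₁ g₂ : ZMod 3, g₁ - g₂ ≠ a ∧ Xor' (g₁ = f₁) (g₂ = f₂)) := by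
  refine ⟨fun h => ⟨f₁, f₂, h, rfl, rfl⟩, fun h => ⟨?_, exists_sub_ne_and_xor_eq h⟩⟩
  rintro g₁ g₂ hg ⟨rfl, rfl⟩
  exact hg h
end
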